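/- Let $T > 0$, let $c : [0,T] \times \mathbb{T} \to [0,\infty)$ be bounded measurable, and let $W : [0,T] \to \mathcal{M}_+(\mathbb{T})$ be a family of finite nonnegative Borel measures on the torus with $\sup_{0 \le s \le T} W_s(\mathbb{T}) < \infty$ and $s \mapsto W_s(f)$ measurable for each continuous $f$. Suppose that for every $F \in C^{1,\infty}([0,T]\times\mathbb{T})$, $W_T(F_T) - W_0(F_0) - \int_0^T W_s((\partial_s + \partial^2_{uu})F_s)\,ds - \int_0^T \int_{\mathbb{T}} c_s(u) (\partial_u F_s(u))^2\,du\,ds \leq 0$. Then $W$ is a weak solution of the heat equation: for every $f \in C^\infty(\mathbb{T})$ and every $h \in C^1([0,T])$, $h(T) W_T(f) - h(0) W_0(f) - \int_0^T h'(s) W_s(f)\,ds = \int_0^T h(s) W_s(f'')\,ds$. -/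

import Mathlib

open MeasureTheory ENNReal

/-- Integration of a function on the torus (given as a `1`-periodic function on `ℝ`,
evaluated at the canonical representative in `[0,1)`) against a measure on the torus
`AddCircle 1`. -/
noncomputable def torusInt (μ : Measure (AddCircle (1 : ℝ))) (F : ℝ → ℝ) : ℝ :=
  ∫ y, F ((AddCircle.equivIco 1 0 y : Set.Ico (0:ℝ) (0 + 1)) : ℝ) ∂μ

/-- A test function in `C^{1,∞}([0,T] × 𝕋)`: a function `F(s,u)`, `1`-periodic in `u`,
continuously differentiable in `s` (with derivative `dF`, jointly continuous) and smooth
in `u`. -/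
structure C1InfTest where
  F : ℝ → ℝ → ℝ
  dF : ℝ → ℝ → ℝ
  hF_cont : Continuous (Function.uncurry F)
  hdF_cont : Continuous (Function.uncurry dF)
  hderiv : ∀ s u, HasDerivAt (fun r => F r u) (dF s u) s
  hsmooth : ∀ s, ContDiff ℝ (⊤ : ℕ∞) (F s)
  hper : ∀ s, Function.Periodic (F s) 1
  hdper : ∀ s, Function.Periodic (dF s) 1

lemma measurable_rep :
    Measurable (fun y : AddCircle (1:ℝ) =>
      ((AddCircle.equivIco 1 0 y : Set.Ico (0:ℝ) (0 + 1)) : ℝ)) :=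
  measurable_subtype_coe.comp (AddCircle.measurableEquivIco (T := 1) 0).measurable

lemma rep_mem (y : AddCircle (1:ℝ)) :
    ((AddCircle.equivIco 1 0 y : Set.Ico (0:ℝ) (0 + 1)) : ℝ) ∈ Set.Icc (0:ℝ) 1 := by
  have h := (AddCircle.equivIco 1 0 y).2
  exact ⟨h.1, by linarith [h.2]⟩

lemma integrable_torus (μ : Measure (AddCircle (1:ℝ))) [IsFiniteMeasure μ]
    (F : ℝ → ℝ) (hF : Continuous F) :
    Integrable (fun y => F ((AddCircle.equivIco 1 0 y : Set.Ico (0:ℝ) (0 + 1)) : ℝ)) μ := by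
  obtain ⟨M, hM⟩ := isCompact_Icc.exists_bound_of_continuousOn
    (s := Set.Icc (0:ℝ) 1) hF.continuousOn
  refine (integrable_const M).mono' ((hF.measurable.comp measurable_rep).aestronglyMeasurable) ?_
  exact ae_of_all _ fun y => hM _ (rep_mem y)

lemma torusInt_const_mul (μ : Measure (AddCircle (1:ℝ))) (k : ℝ) (F : ℝ → ℝ) :
    torusInt μ (fun u => k * F u) = k * torusInt μ F := by
  simp [torusInt, integral_const_mul]

lemma torusInt_add (μ : Measure (AddCircle (1:ℝ))) [IsFiniteMeasure μ]
    (F G : ℝ → ℝ) (hF : Continuous F) (hG : Continuous G) :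
    torusInt μ (fun u => F u + G u) = torusInt μ F + torusInt μ G := by
  simp only [torusInt]
  exact integral_add (integrable_torus μ F hF) (integrable_torus μ G hG)

lemma torusInt_abs_le (μ : Measure (AddCircle (1:ℝ))) [IsFiniteMeasure μ]
    (F : ℝ → ℝ) (M : ℝ) (hM : ∀ x ∈ Set.Icc (0:ℝ) 1, |F x| ≤ M) :
    |torusInt μ F| ≤ M * (μ Set.univ).toReal := by
  have := norm_integral_le_of_norm_le_const (μ := μ)
    (f := fun y => F ((AddCircle.equivIco 1 0 y : Set.Ico (0:ℝ) (0 + 1)) : ℝ)) (C := M)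
    (ae_of_all _ fun y => hM _ (rep_mem y))
  simpa [torusInt, Measure.real] using this

lemma periodic_deriv (f : ℝ → ℝ) (hp : Function.Periodic f 1) :
    Function.Periodic (deriv f) 1 := by
  intro x
  have hfun : (fun y => f (y + 1)) = f := funext hp
  rw [← deriv_comp_add_const f 1 x, hfun]

lemma ii_of_bdd {T K : ℝ} (hT : 0 ≤ T) (g : ℝ → ℝ) (hg : Measurable g)
    (hK : ∀ s ∈ Set.Icc 0 T, |g s| ≤ K) : IntervalIntegrable g volume 0 T := by
  rw [intervalIntegrable_iff_integrableOn_Ioc_of_le hT]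
  refine (integrable_const K).mono' hg.aestronglyMeasurable ?_
  refine (ae_restrict_iff' measurableSet_Ioc).mpr (ae_of_all _ fun s hs => ?_)
  simpa using hK s ⟨hs.1.le, hs.2⟩


/-- if a family of finite measures `W` on the torus satisfies, for every test
function `F ∈ C^{1,∞}([0,T] × 𝕋)`, the inequality
`W_T(F_T) - W_0(F_0) - ∫_0^T W_s((∂_s + ∂²_{uu})F_s) ds - ∫_0^T ∫_𝕋 c_s(u)(∂_u F_s(u))² du ds ≤ 0`,
then `W` is a weak solution of the heat equation. -/
theorem dyn_rate_zero_implies_heat (T : ℝ) (hT : 0 < T)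
    (c : ℝ → ℝ → ℝ) (hc_meas : Measurable (Function.uncurry c))
    (hc_nonneg : ∀ s u, 0 ≤ c s u) (hc_bdd : ∃ B : ℝ, ∀ s u, c s u ≤ B)
    (W : ℝ → Measure (AddCircle (1 : ℝ)))
    (hWb : ∃ C : ℝ≥0∞, C ≠ ⊤ ∧ ∀ s ∈ Set.Icc (0 : ℝ) T, W s Set.univ ≤ C)
    (hWmeas : ∀ F : ℝ → ℝ, Continuous F → Function.Periodic F 1 →
      Measurable fun s => torusInt (W s) F)
    (hineq : ∀ G : C1InfTest,
      torusInt (W T) (G.F T) - torusInt (W 0) (G.F 0)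
        - (∫ s in (0:ℝ)..T, torusInt (W s) (fun u => G.dF s u + deriv (deriv (G.F s)) u))
        - (∫ s in (0:ℝ)..T, ∫ u in (0:ℝ)..1, c s u * (deriv (G.F s) u) ^ 2) ≤ 0) :
    ∀ f : ℝ → ℝ, ContDiff ℝ (⊤ : ℕ∞) f → Function.Periodic f 1 →
      ∀ h : ℝ → ℝ, ContDiff ℝ 1 h →
        h T * torusInt (W T) f - h 0 * torusInt (W 0) f
            - (∫ s in (0:ℝ)..T, deriv h s * torusInt (W s) f)
          = ∫ s in (0:ℝ)..T, h s * torusInt (W s) (deriv (deriv f)) := by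
  intro f hf hfper h hh
  obtain ⟨C, hCtop, hC⟩ := hWb
  have hfin : ∀ s ∈ Set.Icc (0:ℝ) T, IsFiniteMeasure (W s) :=
    fun s hs => ⟨lt_of_le_of_lt (hC s hs) (lt_top_iff_ne_top.mpr hCtop)⟩
  have hfc : Continuous f := hf.continuous
  have hfi : ContDiff ℝ (⊤:ℕ∞) f := hf.of_le (by simp)
  have hd1 : ContDiff ℝ (⊤:ℕ∞) (deriv f) := (contDiff_infty_iff_deriv.mp hfi).2
  have hd2 : ContDiff ℝ (⊤:ℕ∞) (deriv (deriv f)) := (contDiff_infty_iff_deriv.mp hd1).2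
  have hgc : Continuous (deriv (deriv f)) := hd2.continuous
  have hgper : Function.Periodic (deriv (deriv f)) 1 :=
    periodic_deriv _ (periodic_deriv _ hfper)
  have hhc : Continuous h := hh.continuous
  have hdhc : Continuous (deriv h) := hh.continuous_deriv le_rfl
  -- bounds
  obtain ⟨Mf, hMf⟩ := isCompact_Icc.exists_bound_of_continuousOn
    (s := Set.Icc (0:ℝ) 1) hfc.continuousOn
  obtain ⟨Mg, hMg⟩ := isCompact_Icc.exists_bound_of_continuousOn
    (s := Set.Icc (0:ℝ) 1) hgc.continuousOn
  obtain ⟨Dh, hDh⟩ := isCompact_Icc.exists_bound_of_continuousOn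
    (s := Set.Icc (0:ℝ) T) hhc.continuousOn
  obtain ⟨Dd, hDd⟩ := isCompact_Icc.exists_bound_of_continuousOn
    (s := Set.Icc (0:ℝ) T) hdhc.continuousOn
  have hMf0 : 0 ≤ Mf := (norm_nonneg _).trans (hMf 0 ⟨le_rfl, zero_le_one⟩)
  have hMg0 : 0 ≤ Mg := (norm_nonneg _).trans (hMg 0 ⟨le_rfl, zero_le_one⟩)
  set Ct := C.toReal with hCt
  have hTfb : ∀ s ∈ Set.Icc (0:ℝ) T, |torusInt (W s) f| ≤ Mf * Ct := by
    intro s hs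
    haveI := hfin s hs
    refine (torusInt_abs_le (W s) f Mf (fun x hx => hMf x hx)).trans ?_
    exact mul_le_mul_of_nonneg_left (ENNReal.toReal_mono hCtop (hC s hs)) hMf0
  have hTgb : ∀ s ∈ Set.Icc (0:ℝ) T, |torusInt (W s) (deriv (deriv f))| ≤ Mg * Ct := by
    intro s hs
    haveI := hfin s hs
    refine (torusInt_abs_le (W s) _ Mg (fun x hx => hMg x hx)).trans ?_
    exact mul_le_mul_of_nonneg_left (ENNReal.toReal_mono hCtop (hC s hs)) hMg0
  -- interval integrability
  have hii1 : IntervalIntegrable (fun s => deriv h s * torusInt (W s) f) volume 0 T := by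
    refine ii_of_bdd (K := Dd * (Mf * Ct)) hT.le _
      (hdhc.measurable.mul (hWmeas f hfc hfper)) ?_
    intro s hs
    rw [abs_mul]
    exact mul_le_mul (hDd s hs) (hTfb s hs) (abs_nonneg _)
      ((norm_nonneg _).trans (hDd 0 ⟨le_rfl, hT.le⟩))
  have hii2 : IntervalIntegrable (fun s => h s * torusInt (W s) (deriv (deriv f)))
      volume 0 T := by
    refine ii_of_bdd (K := Dh * (Mg * Ct)) hT.le _
      (hhc.measurable.mul (hWmeas _ hgc hgper)) ?_
    intro s hs
    rw [abs_mul]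
    exact mul_le_mul (hDh s hs) (hTgb s hs) (abs_nonneg _)
      ((norm_nonneg _).trans (hDh 0 ⟨le_rfl, hT.le⟩))
  set P1 := h T * torusInt (W T) f with hP1
  set P2 := h 0 * torusInt (W 0) f with hP2
  set I1 := ∫ s in (0:ℝ)..T, deriv h s * torusInt (W s) f with hI1
  set I2 := ∫ s in (0:ℝ)..T, h s * torusInt (W s) (deriv (deriv f)) with hI2
  set Q := ∫ s in (0:ℝ)..T, ∫ u in (0:ℝ)..1, c s u * (h s * deriv f u) ^ 2 with hQ
  have hQ0 : 0 ≤ Q :=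
    intervalIntegral.integral_nonneg hT.le fun s _ =>
      intervalIntegral.integral_nonneg zero_le_one fun u _ =>
        mul_nonneg (hc_nonneg s u) (sq_nonneg _)
  have hdiff : Differentiable ℝ h := hh.differentiable one_ne_zero
  have hkey : ∀ a : ℝ, a * (P1 - P2 - I1 - I2) - a ^ 2 * Q ≤ 0 := by
    intro a
    have hDa : ∀ s : ℝ, deriv (fun u => a * h s * f u) = fun u => a * h s * deriv f u :=
      fun s => deriv_const_mul_field' _
    have hDa2 : ∀ s : ℝ, deriv (deriv (fun u => a * h s * f u))
        = fun u => a * h s * deriv (deriv f) u := by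
      intro s
      rw [hDa s]
      exact deriv_const_mul_field' _
    have H := hineq
      { F := fun s u => a * h s * f u
        dF := fun s u => a * deriv h s * f u
        hF_cont := by
          exact (continuous_const.mul (hhc.comp continuous_fst)).mul (hfc.comp continuous_snd)
        hdF_cont := by
          exact (continuous_const.mul (hdhc.comp continuous_fst)).mul (hfc.comp continuous_snd)
        hderiv := fun s u =>
          (((hdiff s).hasDerivAt.const_mul a).mul_const (f u))
        hsmooth := fun s => contDiff_const.mul hf
        hper := fun s x => by simp only []; rw [hfper x]
        hdper := fun s x => by simp only []; rw [hfper x] }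
    simp only [] at H
    have e1 : torusInt (W T) (fun u => a * h T * f u) = a * P1 := by
      rw [torusInt_const_mul (W T) (a * h T) f, hP1]; ring
    have e2 : torusInt (W 0) (fun u => a * h 0 * f u) = a * P2 := by
      rw [torusInt_const_mul (W 0) (a * h 0) f, hP2]; ring
    have e3 : (∫ s in (0:ℝ)..T, torusInt (W s)
          (fun u => a * deriv h s * f u + deriv (deriv (fun u => a * h s * f u)) u))
        = a * I1 + a * I2 := by
      have heq : Set.EqOn
          (fun s => torusInt (W s)
            (fun u => a * deriv h s * f u + deriv (deriv (fun u => a * h s * f u)) u))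
          (fun s => a * (deriv h s * torusInt (W s) f)
            + a * (h s * torusInt (W s) (deriv (deriv f))))
          (Set.uIcc (0:ℝ) T) := by
        intro s hs
        rw [Set.uIcc_of_le hT.le] at hs
        haveI := hfin s hs
        simp only [hDa2 s]
        rw [torusInt_add (W s) (fun u => a * deriv h s * f u) (fun u => a * h s * deriv (deriv f) u)
            (continuous_const.mul hfc) (continuous_const.mul hgc),
          torusInt_const_mul, torusInt_const_mul]
        ring
      rw [intervalIntegral.integral_congr heq,
        intervalIntegral.integral_add (hii1.const_mul a) (hii2.const_mul a),
        intervalIntegral.integral_const_mul, intervalIntegral.integral_const_mul,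
        hI1, hI2]
    have e4 : (∫ s in (0:ℝ)..T, ∫ u in (0:ℝ)..1,
          c s u * (deriv (fun u => a * h s * f u) u) ^ 2) = a ^ 2 * Q := by
      have hinner : ∀ s : ℝ, (∫ u in (0:ℝ)..1, c s u * (deriv (fun u => a * h s * f u) u) ^ 2)
          = a ^ 2 * ∫ u in (0:ℝ)..1, c s u * (h s * deriv f u) ^ 2 := by
        intro s
        simp only [hDa s]
        rw [← intervalIntegral.integral_const_mul]
        apply intervalIntegral.integral_congr
        intro u _
        ring
      simp only [hinner]
      rw [intervalIntegral.integral_const_mul, hQ]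
    rw [e1, e2, e3, e4] at H
    nlinarith [H]
  -- conclude
  set A := P1 - P2 - I1 - I2 with hA
  have hQ1 : (0:ℝ) < Q + 1 := by linarith
  set t := A / (Q + 1) with htdef
  have ht : t * (Q + 1) = A := div_mul_cancel₀ A hQ1.ne'
  have h1 := hkey t
  have e : t * A - t ^ 2 * Q = t ^ 2 := by rw [← ht]; ring
  have h3 : t ^ 2 ≤ 0 := by linarith [h1, e]
  have h4 : t ^ 2 = 0 := le_antisymm h3 (sq_nonneg t)
  have h5 : t = 0 := by
    exact (pow_eq_zero_iff two_ne_zero).mp h4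
  have hA0 : A = 0 := by rw [← ht, h5]; ring
  have : P1 - P2 - I1 - I2 = 0 := by rw [← hA]; exact hA0
  linarith [this]
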